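/- arXiv:1310.7677 — 6 statements merged into one kernel-verified Lean document; each statement's English description precedes it below -/
import Mathlib

section
/- Under the CFL-type condition Δt/h^α ≤ 1/(2 ε C_α (1 + 1/α − ζ(α−1))), the third-order TVD Runge-Kutta time discretization of the semi-discrete absorbing scheme satisfies the discrete maximum principle: if M ≥ 0 and 0 ≤ P^0_j ≤ M for all j ∈ ℤ (with P^0_j = 0 for |j| ≥ J), then for every n ≥ 0 and every j ∈ ℤ one has 0 ≤ P^n_j ≤ M, where P^{n+1} = (1/3)P^n + (2/3)U^{(2)} + (2/3)Δt R(U^{(2)}), U^{(2)} = (3/4)P^n + (1/4)U^{(1)} + (1/4)Δt R(U^{(1)}), U^{(1)} = P^n + Δt R(P^n). -/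
open scoped BigOperators

/-- The constant `C_α = α Γ((1+α)/2) / (2^{1-α} √π Γ(1-α/2))`. -/
noncomputable def Cconst (α : ℝ) : ℝ :=
  α * Real.Gamma ((1 + α) / 2) /
    ((2 : ℝ) ^ (1 - α) * Real.sqrt Real.pi * Real.Gamma (1 - α / 2))

/-- The real value of the Riemann zeta function at a real argument. -/
noncomputable def zetaR (s : ℝ) : ℝ := (riemannZeta (s : ℂ)).re

/-- The double-primed sum `Σ''_{k=a, k≠0}^{b} g(k)`: the sum over integers `a ≤ k ≤ b`,
omitting `k = 0`, where the end terms `k = a` and `k = b` carry weight `1/2`. -/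
noncomputable def dsum (a b : ℤ) (g : ℤ → ℝ) : ℝ :=
  ∑ k ∈ (Finset.Icc a b).erase 0, (if k = a ∨ k = b then (1 : ℝ) / 2 else 1) * g k

/-- The semi-discrete operator `R` for the absorbing condition. -/
noncomputable def Rabs (α ε h : ℝ) (J : ℤ) (U : ℤ → ℝ) : ℤ → ℝ := fun j =>
  if |j| < J then
    -(ε * Cconst α * zetaR (α - 1) * h ^ (-α)) * (U (j - 1) - 2 * U j + U (j + 1))
      - ε * Cconst α / α *
          ((1 + (j : ℝ) * h) ^ (-α) + (1 - (j : ℝ) * h) ^ (-α)) * U j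
      + ε * Cconst α * h *
          dsum (-J - j) (J - j) (fun k => (U (j + k) - U j) / |(k : ℝ) * h| ^ (1 + α))
  else 0

/-!
Every stage of the Runge–Kutta scheme is a convex combination of `P^n` and forward Euler steps
`V ↦ V + Δt R(V)`, so it suffices that one Euler step preserves the convex set of grid functions
with values in `[0, M]` that vanish for `|j| ≥ J`. At an interior node
`R(V)_j = N_j(V) - D_j V_j`, where the inflow `N_j(V)` has nonnegative weights because
`ζ(α - 1) < 0`; hence `V_j + Δt R(V)_j` stays in `[0, M]` as soon as `Δt D_j ≤ 1`.
Comparing the quadrature weights with `∫ x^(-1-α)`, i.e.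
`∑_{k ≤ K} k^(-1-α) + K^(-α)/α ≤ 1 + 1/α`, gives
`D_j ≤ 2 ε C_α (1 + 1/α - ζ(α - 1)) h^(-α)`, which is what the CFL condition controls.

The sign of `ζ` on `(-1, 1)` comes from the functional equation on `(-1, 0)`, and on `(0, 1)` from
`(1 - 2^(1-s)) ζ(s) = ∑ (-1)^(n-1) n^(-s)`, continued analytically from `Re s > 1`.
-/

lemma Cconst_pos {α : ℝ} (hα : 0 < α) (hα2 : α < 2) : 0 < Cconst α := by
  have g1 : 0 < Real.Gamma ((1 + α) / 2) := Real.Gamma_pos_of_pos (by linarith)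
  have g2 : 0 < Real.Gamma (1 - α / 2) := Real.Gamma_pos_of_pos (by linarith)
  unfold Cconst
  positivity

open Real in
lemma zetaR_neg_of_neg {s : ℝ} (h1 : -1 < s) (h0 : s < 0) : zetaR s < 0 := by
  set u := 1 - s with hu
  have hu1 : 1 < u := by linarith
  have hfe := riemannZeta_one_sub (s := (u : ℂ))
    (fun n hn => by
      have := congrArg Complex.re hn
      simp only [Complex.ofReal_re, Complex.neg_re, Complex.natCast_re] at this
      linarith [n.cast_nonneg (α := ℝ)])
    (by exact_mod_cast hu1.ne')
  have hζu : riemannZeta u = ((riemannZeta u).re : ℂ) :=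
    Complex.ext (by simp) (by simp [riemannZeta_im_eq_zero_of_one_lt hu1])
  have hζ : riemannZeta s =
      ((2 * (2 * π) ^ (-u) * Gamma u * cos (π * u / 2) * (riemannZeta u).re : ℝ) : ℂ) := by
    rw [show (s : ℂ) = 1 - u by push_cast [hu]; ring, hfe, hζu]
    push_cast [Complex.ofReal_cpow (by positivity : (0 : ℝ) ≤ 2 * π), Complex.Gamma_ofReal]
    rfl
  have hcos : cos (π * u / 2) < 0 :=
    cos_neg_of_pi_div_two_lt_of_lt (by nlinarith [pi_pos]) (by nlinarith [pi_pos])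
  have hpos : 0 < 2 * (2 * π) ^ (-u) * Gamma u :=
    mul_pos (by positivity) (Gamma_pos_of_pos (by linarith))
  rw [zetaR, hζ, Complex.ofReal_re]
  exact mul_neg_of_neg_of_pos (mul_neg_of_pos_of_neg hpos hcos)
    (riemannZeta_re_pos_of_one_lt hu1)

lemma norm_cpow_neg_sub_cpow_neg_add_one_le {a : ℝ} (ha : 0 < a) {z : ℂ} (hz : -1 ≤ z.re) :
    ‖(a : ℂ) ^ (-z) - ((a + 1 : ℝ) : ℂ) ^ (-z)‖ ≤ ‖z‖ * a ^ (-z.re - 1) := by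
  rcases eq_or_ne z 0 with rfl | hz0
  · simp
  have hderiv : ∀ x ∈ Set.Icc a (a + 1), HasDerivWithinAt (fun y : ℝ => (y : ℂ) ^ (-z))
      (-z * (x : ℂ) ^ (-z - 1)) (Set.Icc a (a + 1)) x := fun x hx =>
    (hasDerivAt_ofReal_cpow_const (ha.trans_le hx.1).ne' (neg_ne_zero.2 hz0)).hasDerivWithinAt
  have hbound : ∀ x ∈ Set.Icc a (a + 1),
      ‖-z * (x : ℂ) ^ (-z - 1)‖ ≤ ‖z‖ * a ^ (-z.re - 1) := by
    intro x hx
    rw [norm_mul, norm_neg, Complex.norm_cpow_eq_rpow_re_of_pos (ha.trans_le hx.1)]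
    gcongr
    exact Real.rpow_le_rpow_of_nonpos ha hx.1 (by simp; linarith)
  simpa [norm_sub_rev] using (convex_Icc a (a + 1)).norm_image_sub_le_of_norm_hasDerivWithin_le
    hderiv hbound (Set.left_mem_Icc.2 (by linarith)) (Set.right_mem_Icc.2 (by linarith))

lemma summable_two_mul_add_one_rpow {p : ℝ} (hp : p < -1) :
    Summable fun i : ℕ => (2 * i + 1 : ℝ) ^ p := by
  refine Summable.of_nonneg_of_le (fun i => by positivity) (fun i => ?_)
    ((summable_nat_add_iff 1).2 (Real.summable_nat_rpow.2 hp))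
  exact Real.rpow_le_rpow_of_nonpos (by positivity)
    (by push_cast; linarith [i.cast_nonneg (α := ℝ)]) (by linarith)

-- Consecutive terms of the Dirichlet eta series `∑ (-1)^(n-1) n^(-z)`, paired.
noncomputable def etaTerm (i : ℕ) (z : ℂ) : ℂ :=
  ((2 * i + 1 : ℝ) : ℂ) ^ (-z) - ((2 * i + 2 : ℝ) : ℂ) ^ (-z)

lemma norm_etaTerm_le (i : ℕ) {z : ℂ} (hz : -1 ≤ z.re) :
    ‖etaTerm i z‖ ≤ ‖z‖ * (2 * i + 1 : ℝ) ^ (-z.re - 1) := by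
  have := norm_cpow_neg_sub_cpow_neg_add_one_le (a := 2 * i + 1) (by positivity) hz
  rwa [show (2 * i + 1 : ℝ) + 1 = 2 * i + 2 by ring] at this

lemma one_sub_two_cpow_mul_riemannZeta_eq_tsum_etaTerm {z : ℂ} (hz : 1 < z.re) :
    (1 - 2 ^ (1 - z)) * riemannZeta z = ∑' i, etaTerm i z := by
  set F : ℕ → ℂ := fun m => ((m + 1 : ℝ) : ℂ) ^ (-z) with hF
  have hFsum : Summable F := by
    refine Summable.of_norm ?_
    simp only [hF, Complex.norm_cpow_eq_rpow_re_of_pos (Nat.cast_add_one_pos _), Complex.neg_re]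
    exact_mod_cast (summable_nat_add_iff 1).2 (Real.summable_nat_rpow.2 (by linarith : -z.re < -1))
  have hζ : riemannZeta z = ∑' m, F m := by
    rw [zeta_eq_tsum_one_div_nat_add_one_cpow hz]
    refine tsum_congr fun n => ?_
    simp only [hF, Complex.cpow_neg, one_div]
    push_cast; rfl
  have hodd : Summable fun k : ℕ => F (2 * k) := hFsum.comp_injective (fun a b h => by omega)
  have heven : Summable fun k : ℕ => F (2 * k + 1) := hFsum.comp_injective (fun a b h => by omega)
  have hdouble : ∀ m : ℕ, (2 : ℂ) ^ (-z) * F m = F (2 * m + 1) := fun m => by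
    simp only [hF]
    rw [show ((2 : ℂ)) = ((2 : ℝ) : ℂ) by norm_num,
      ← Complex.mul_cpow_ofReal_nonneg (by norm_num) (by positivity)]
    push_cast; ring_nf
  have hO : ∑' k, F (2 * k + 1) = 2 ^ (-z) * (∑' k, F (2 * k) + ∑' k, F (2 * k + 1)) := by
    rw [tsum_even_add_odd hodd heven, ← tsum_mul_left]
    exact (tsum_congr hdouble).symm
  have hpow : (2 : ℂ) ^ (1 - z) = 2 * 2 ^ (-z) := by
    rw [sub_eq_add_neg, Complex.cpow_add _ _ two_ne_zero, Complex.cpow_one]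
  have hsplit : ∑' i, etaTerm i z = ∑' k, F (2 * k) - ∑' k, F (2 * k + 1) := by
    rw [← hodd.tsum_sub heven]
    refine tsum_congr fun i => ?_
    simp only [etaTerm, hF]
    push_cast; ring_nf
  rw [hsplit, hpow, hζ, ← tsum_even_add_odd hodd heven]
  linear_combination 2 * hO

-- The slit keeps the pole of `ζ` out and makes the box star-shaped about its real points.
def slitBox (δ : ℝ) : Set ℂ :=
  {z | δ < z.re ∧ z.re < 3 ∧ |z.im| < 1 ∧ (z.im ≠ 0 ∨ z.re < 1)}

lemma isOpen_slitBox (δ : ℝ) : IsOpen (slitBox δ) :=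
  (isOpen_lt continuous_const Complex.continuous_re).inter <|
    (isOpen_lt Complex.continuous_re continuous_const).inter <|
    (isOpen_lt (continuous_abs.comp Complex.continuous_im) continuous_const).inter <|
    (isOpen_ne_fun Complex.continuous_im continuous_const).union
      (isOpen_lt Complex.continuous_re continuous_const)

lemma ofReal_mem_slitBox {δ c : ℝ} (hδ : δ < c) (hc : c < 1) : (c : ℂ) ∈ slitBox δ :=
  ⟨by simpa using hδ, by simp; linarith, by simp, Or.inr (by simpa using hc)⟩

lemma isPreconnected_slitBox {δ : ℝ} (hδ : δ < 1) : IsPreconnected (slitBox δ) := by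
  obtain ⟨c, hδc, hc1⟩ := exists_between hδ
  have hstar : StarConvex ℝ (c : ℂ) (slitBox δ) := by
    rintro y ⟨h1, h2, h3, h4⟩ a b ha hb hab
    have hre := convex_Ioo δ 3 (show c ∈ Set.Ioo δ 3 by constructor <;> linarith) ⟨h1, h2⟩
      ha hb hab
    simp only [smul_eq_mul] at hre
    simp only [slitBox, Set.mem_ofPred_eq, Complex.add_re, Complex.add_im, Complex.real_smul,
      Complex.re_ofReal_mul, Complex.im_ofReal_mul, Complex.ofReal_re, Complex.ofReal_im,
      mul_zero, zero_add]
    refine ⟨hre.1, hre.2, ?_, ?_⟩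
    · rw [abs_mul, abs_of_nonneg hb]
      nlinarith [mul_nonneg ha (abs_nonneg y.im)]
    · by_cases hb0 : b = 0
      · subst hb0
        simp only [add_zero] at hab
        subst hab
        right; linarith
      by_cases hy : y.im = 0
      · right
        have := convex_Iio (1 : ℝ) (show c < 1 by linarith) (h4.resolve_left (not_not.2 hy))
          ha hb hab
        simp only [smul_eq_mul] at this
        exact this
      · exact Or.inl (mul_ne_zero hb0 hy)
  exact (hstar.isPathConnected (ofReal_mem_slitBox hδc hc1)).isConnected.isPreconnected

lemma differentiableOn_tsum_etaTerm {δ : ℝ} (hδ : 0 < δ) :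
    DifferentiableOn ℂ (fun z => ∑' i, etaTerm i z) (slitBox δ) := by
  refine Complex.differentiableOn_tsum_of_summable_norm
    ((summable_two_mul_add_one_rpow (p := -δ - 1) (by linarith)).mul_left 4)
    (fun i => ?_) (isOpen_slitBox δ) (fun i z hz => ?_)
  · refine Differentiable.differentiableOn (.sub ?_ ?_) <;>
      exact Differentiable.const_cpow differentiable_neg (Or.inl (by norm_cast))
  · obtain ⟨h1, h2, h3, -⟩ := hz
    have hz4 : ‖z‖ ≤ 4 := by
      have := Complex.norm_le_abs_re_add_abs_im z
      rw [abs_of_pos (hδ.trans h1)] at this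
      linarith
    calc ‖etaTerm i z‖ ≤ ‖z‖ * (2 * i + 1 : ℝ) ^ (-z.re - 1) :=
          norm_etaTerm_le i (by linarith)
      _ ≤ 4 * (2 * i + 1 : ℝ) ^ (-δ - 1) := by
        gcongr
        linarith [i.cast_nonneg (α := ℝ)]

lemma one_sub_two_cpow_mul_riemannZeta_eqOn_slitBox {δ : ℝ} (hδ : 0 < δ) (hδ1 : δ < 1) :
    Set.EqOn (fun z => (1 - 2 ^ (1 - z)) * riemannZeta z) (fun z => ∑' i, etaTerm i z)
      (slitBox δ) := by
  have hζ : DifferentiableOn ℂ (fun z => (1 - 2 ^ (1 - z)) * riemannZeta z) (slitBox δ) := by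
    intro z hz
    have hz1 : z ≠ 1 := by
      rintro rfl
      simpa using hz.2.2.2
    exact (((differentiableAt_const _).sub ((differentiableAt_const _).sub
      differentiableAt_id |>.const_cpow (Or.inl two_ne_zero))).mul
      (differentiableAt_riemannZeta hz1)).differentiableWithinAt
  have hz₀ : (⟨2, 1 / 2⟩ : ℂ) ∈ slitBox δ := by
    exact ⟨by norm_num; linarith, by norm_num, by norm_num [abs_of_pos], Or.inl (by norm_num)⟩
  refine (hζ.analyticOnNhd (isOpen_slitBox δ)).eqOn_of_preconnected_of_eventuallyEq
    ((differentiableOn_tsum_etaTerm hδ).analyticOnNhd (isOpen_slitBox δ))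
    (isPreconnected_slitBox hδ1) hz₀ ?_
  filter_upwards [(isOpen_lt continuous_const Complex.continuous_re).mem_nhds
    (show (1 : ℝ) < (⟨2, 1 / 2⟩ : ℂ).re by norm_num)] with z hz
  exact one_sub_two_cpow_mul_riemannZeta_eq_tsum_etaTerm hz

lemma etaTerm_ofReal (i : ℕ) (s : ℝ) :
    etaTerm i s = (((2 * i + 1 : ℝ) ^ (-s) - (2 * i + 2 : ℝ) ^ (-s) : ℝ) : ℂ) := by
  rw [etaTerm, Complex.ofReal_sub, Complex.ofReal_cpow (by positivity),
    Complex.ofReal_cpow (by positivity), Complex.ofReal_neg]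

lemma exists_pos_eq_tsum_etaTerm_ofReal {s : ℝ} (hs : 0 < s) :
    ∃ T : ℝ, 0 < T ∧ ∑' i, etaTerm i s = T := by
  have hnonneg : ∀ i : ℕ, 0 ≤ (2 * i + 1 : ℝ) ^ (-s) - (2 * i + 2 : ℝ) ^ (-s) := fun i =>
    sub_nonneg.2 (Real.rpow_le_rpow_of_nonpos (by positivity) (by linarith) (by linarith))
  have hsum : Summable fun i : ℕ => (2 * i + 1 : ℝ) ^ (-s) - (2 * i + 2 : ℝ) ^ (-s) := by
    refine Summable.of_nonneg_of_le hnonneg (fun i => ?_)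
      ((summable_two_mul_add_one_rpow (p := -s - 1) (by linarith)).mul_left s)
    have := norm_etaTerm_le i (z := s) (by simp; linarith)
    rwa [etaTerm_ofReal, Complex.norm_real, Real.norm_of_nonneg (hnonneg i), Complex.norm_real,
      Real.norm_of_nonneg hs.le, Complex.ofReal_re] at this
  refine ⟨_, hsum.tsum_pos hnonneg 0 ?_, ?_⟩
  · norm_num
    exact Real.rpow_lt_one_of_one_lt_of_neg one_lt_two (by linarith)
  · rw [Complex.ofReal_tsum]
    exact tsum_congr (etaTerm_ofReal · s)

lemma zetaR_neg_of_pos {s : ℝ} (h0 : 0 < s) (h1 : s < 1) : zetaR s < 0 := by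
  obtain ⟨T, hT, hη⟩ := exists_pos_eq_tsum_etaTerm_ofReal h0
  have h := one_sub_two_cpow_mul_riemannZeta_eqOn_slitBox (by linarith) (by linarith)
    (ofReal_mem_slitBox (δ := s / 2) (by linarith) h1)
  have hfactor : (1 : ℂ) - 2 ^ (1 - (s : ℂ)) = ((1 - 2 ^ (1 - s) : ℝ) : ℂ) := by
    rw [Complex.ofReal_sub, Complex.ofReal_cpow zero_le_two]
    push_cast; rfl
  have hneg : 1 - (2 : ℝ) ^ (1 - s) < 0 :=
    sub_neg.2 (Real.one_lt_rpow one_lt_two (by linarith))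
  simp only [hfactor, hη] at h
  have hζ : riemannZeta s = ((T / (1 - 2 ^ (1 - s)) : ℝ) : ℂ) := by
    rw [Complex.ofReal_div, eq_div_iff (by exact_mod_cast hneg.ne), mul_comm]
    exact h
  rw [zetaR, hζ, Complex.ofReal_re]
  exact div_neg_of_pos_of_neg hT hneg

lemma zetaR_neg {s : ℝ} (h1 : -1 < s) (h2 : s < 1) : zetaR s < 0 := by
  rcases lt_trichotomy s 0 with hs | rfl | hs
  · exact zetaR_neg_of_neg h1 hs
  · norm_num [zetaR, riemannZeta_zero]
  · exact zetaR_neg_of_pos hs h2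

section dsum

variable {a b : ℤ}

lemma dsum_mono {g₁ g₂ : ℤ → ℝ} (hg : ∀ k ≠ 0, g₁ k ≤ g₂ k) :
    dsum a b g₁ ≤ dsum a b g₂ :=
  Finset.sum_le_sum fun k hk => mul_le_mul_of_nonneg_left (hg k (Finset.ne_of_mem_erase hk))
    (by split_ifs <;> norm_num)

lemma dsum_nonneg {g : ℤ → ℝ} (hg : ∀ k ≠ 0, 0 ≤ g k) : 0 ≤ dsum a b g := by
  simpa [dsum] using dsum_mono (a := a) (b := b) hg

lemma dsum_le_sum {g : ℤ → ℝ} (hg : ∀ k ≠ 0, 0 ≤ g k) :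
    dsum a b g ≤ ∑ k ∈ (Finset.Icc a b).erase 0, g k :=
  Finset.sum_le_sum fun k hk => mul_le_of_le_one_left (hg k (Finset.ne_of_mem_erase hk))
    (by split_ifs <;> norm_num)

lemma dsum_sub (g₁ g₂ : ℤ → ℝ) :
    dsum a b (fun k => g₁ k - g₂ k) = dsum a b g₁ - dsum a b g₂ := by
  simp only [dsum, mul_sub, Finset.sum_sub_distrib]

lemma dsum_const_mul (c : ℝ) (g : ℤ → ℝ) :
    dsum a b (fun k => c * g k) = c * dsum a b g := by
  simp only [dsum, Finset.mul_sum, mul_left_comm]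

end dsum

lemma mul_add_one_rpow_neg_le_sub {α x : ℝ} (hα : 0 ≤ α) (hx : 0 < x) :
    α * (x + 1) ^ (-(1 + α)) ≤ x ^ (-α) - (x + 1) ^ (-α) := by
  have hx1 : 0 < x + 1 := by linarith
  have hbern := one_add_mul_self_le_rpow_one_add (s := 1 / x)
    (by linarith [one_div_pos.2 hx]) (p := 1 + α) (by linarith)
  rw [show 1 + 1 / x = (x + 1) / x by field_simp, Real.div_rpow hx1.le hx.le,
    Real.rpow_add hx1, Real.rpow_add hx, Real.rpow_one, Real.rpow_one] at hbern
  rw [Real.rpow_neg hx.le, Real.rpow_neg hx1.le, Real.rpow_neg hx1.le, Real.rpow_add hx1,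
    Real.rpow_one]
  set a := x ^ α
  set b := (x + 1) ^ α
  have ha : 0 < a := Real.rpow_pos_of_pos hx α
  have hb : 0 < b := Real.rpow_pos_of_pos hx1 α
  have key : (x + 1) * a + α * a ≤ (x + 1) * b := by
    rw [le_div_iff₀ (by positivity)] at hbern
    have : (1 + (1 + α) * (1 / x)) * (x * a) = (x + 1) * a + α * a := by field_simp; ring
    linarith
  rw [← sub_nonneg, show a⁻¹ - b⁻¹ - α * ((x + 1) * b)⁻¹
    = ((x + 1) * b - (x + 1) * a - α * a) / (a * b * (x + 1)) by field_simp]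
  exact div_nonneg (by linarith) (by positivity)

lemma sum_Icc_rpow_neg_add_le {α : ℝ} (hα : 0 < α) {K : ℤ} (hK : 1 ≤ K) :
    ∑ k ∈ Finset.Icc 1 K, (k : ℝ) ^ (-(1 + α)) + (K : ℝ) ^ (-α) / α ≤ 1 + 1 / α := by
  induction K, hK using Int.leInduction with
  | base => norm_num
  | succ n hn ih =>
    have hstep := mul_add_one_rpow_neg_le_sub hα.le (by exact_mod_cast hn.trans_lt' one_pos :
      (0 : ℝ) < n)
    rw [show Finset.Icc 1 (n + 1) = insert (n + 1) (Finset.Icc 1 n) by ext; simp; omega,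
      Finset.sum_insert (by simp), Int.cast_add, Int.cast_one]
    have : (n + 1 : ℝ) ^ (-(1 + α)) ≤ ((n : ℝ) ^ (-α) - (n + 1 : ℝ) ^ (-α)) / α := by
      rw [le_div_iff₀ hα]; linarith
    linarith [sub_div ((n : ℝ) ^ (-α)) ((n + 1 : ℝ) ^ (-α)) α]

lemma sum_erase_zero_Icc_abs (f : ℤ → ℝ) {a b : ℤ} (ha : 0 ≤ a) (hb : 0 ≤ b) :
    ∑ k ∈ (Finset.Icc (-a) b).erase 0, f |k| =
      ∑ k ∈ Finset.Icc 1 a, f k + ∑ k ∈ Finset.Icc 1 b, f k := by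
  rw [show (Finset.Icc (-a) b).erase 0 = Finset.Icc (-a) (-1) ∪ Finset.Icc 1 b by
      ext; simp; omega,
    Finset.sum_union (Finset.disjoint_left.2 fun k h1 h2 => by simp at h1 h2; omega)]
  congr 1
  · exact Finset.sum_nbij' (fun k => -k) (fun k => -k) (by simp; omega) (by simp; omega)
      (by simp) (by simp) (fun k hk => by simp at hk; rw [abs_of_neg (by omega)])
  · exact Finset.sum_congr rfl fun k hk => by simp at hk; rw [abs_of_pos (by omega)]

lemma mul_dsum_inv_abs_rpow_le {α h : ℝ} (hh : 0 < h) {a b : ℤ} (ha : 0 ≤ a) (hb : 0 ≤ b) :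
    h * dsum (-a) b (fun k => 1 / |(k : ℝ) * h| ^ (1 + α)) ≤
      (∑ k ∈ Finset.Icc 1 a, (k : ℝ) ^ (-(1 + α)) +
        ∑ k ∈ Finset.Icc 1 b, (k : ℝ) ^ (-(1 + α))) * h ^ (-α) := by
  have hterm (k : ℤ) :
      1 / |(k : ℝ) * h| ^ (1 + α) = ((|k| : ℤ) : ℝ) ^ (-(1 + α)) * h ^ (-(1 + α)) := by
      rw [abs_mul, abs_of_pos hh, Int.cast_abs, Real.mul_rpow (abs_nonneg _) hh.le,
        Real.rpow_neg (abs_nonneg _), Real.rpow_neg hh.le, one_div, mul_inv]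
  have hpow : h * h ^ (-(1 + α)) = h ^ (-α) := by
    rw [show -α = 1 + -(1 + α) by ring, Real.rpow_add hh, Real.rpow_one]
  calc h * dsum (-a) b (fun k => 1 / |(k : ℝ) * h| ^ (1 + α))
      ≤ h * ∑ k ∈ (Finset.Icc (-a) b).erase 0, 1 / |(k : ℝ) * h| ^ (1 + α) :=
        mul_le_mul_of_nonneg_left (dsum_le_sum fun _ _ => by positivity) hh.le
    _ = _ := by
        simp only [hterm]
        rw [sum_erase_zero_Icc_abs (fun k : ℤ => (k : ℝ) ^ (-(1 + α)) * h ^ (-(1 + α))) ha hb,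
          ← Finset.sum_mul, ← Finset.sum_mul, ← add_mul, mul_left_comm, hpow]

noncomputable def RabsDiag (α ε h : ℝ) (J j : ℤ) : ℝ :=
  ε * Cconst α * (-2 * zetaR (α - 1) * h ^ (-α)
    + ((1 + j * h) ^ (-α) + (1 - j * h) ^ (-α)) / α
    + h * dsum (-J - j) (J - j) fun k => 1 / |(k : ℝ) * h| ^ (1 + α))

noncomputable def RabsInflow (α ε h : ℝ) (J : ℤ) (V : ℤ → ℝ) (j : ℤ) : ℝ :=
  ε * Cconst α * (-zetaR (α - 1) * h ^ (-α) * (V (j - 1) + V (j + 1))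
    + h * dsum (-J - j) (J - j) fun k => V (j + k) / |(k : ℝ) * h| ^ (1 + α))

section Rabs

variable {α ε h : ℝ} {J j : ℤ}

lemma Rabs_of_le_abs (V : ℤ → ℝ) (hj : J ≤ |j|) : Rabs α ε h J V j = 0 :=
  if_neg hj.not_gt

lemma Rabs_eq_inflow_sub_diag (V : ℤ → ℝ) (hj : |j| < J) :
    Rabs α ε h J V j = RabsInflow α ε h J V j - RabsDiag α ε h J j * V j := by
  have hsplit := dsum_sub (a := -J - j) (b := J - j)
    (fun k => V (j + k) / |(k : ℝ) * h| ^ (1 + α))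
    (fun k => V j * (1 / |(k : ℝ) * h| ^ (1 + α)))
  rw [dsum_const_mul] at hsplit
  simp only [← sub_div, mul_one_div] at hsplit
  rw [Rabs, if_pos hj, hsplit, RabsInflow, RabsDiag]
  ring

lemma RabsInflow_nonneg (hc : 0 ≤ ε * Cconst α) (hz : zetaR (α - 1) ≤ 0) (hh : 0 ≤ h)
    {V : ℤ → ℝ} (hV : ∀ k, 0 ≤ V k) : 0 ≤ RabsInflow α ε h J V j := by
  have hdsum : 0 ≤ dsum (-J - j) (J - j) fun k => V (j + k) / |(k : ℝ) * h| ^ (1 + α) :=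
    dsum_nonneg fun k _ => div_nonneg (hV _) (by positivity)
  exact mul_nonneg hc (add_nonneg (mul_nonneg (mul_nonneg (neg_nonneg.2 hz)
    (Real.rpow_nonneg hh _)) (add_nonneg (hV _) (hV _))) (mul_nonneg hh hdsum))

lemma RabsInflow_le (hα : 0 < α) (hc : 0 ≤ ε * Cconst α) (hz : zetaR (α - 1) ≤ 0)
    (hh : 0 ≤ h) (hjh : |(j : ℝ) * h| ≤ 1) {V : ℤ → ℝ} {M : ℝ} (hM : 0 ≤ M)
    (hV : ∀ k, V k ≤ M) :
    RabsInflow α ε h J V j ≤ RabsDiag α ε h J j * M := by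
  set Q : ℤ → ℝ := fun k => |(k : ℝ) * h| ^ (1 + α)
  have hA : 0 ≤ ((1 + j * h) ^ (-α) + (1 - j * h) ^ (-α)) / α := by
    obtain ⟨h1, h2⟩ := abs_le.1 hjh
    exact div_nonneg (add_nonneg (Real.rpow_nonneg (by linarith) _)
      (Real.rpow_nonneg (by linarith) _)) hα.le
  have hdsum : (dsum (-J - j) (J - j) fun k => V (j + k) / Q k) ≤
      M * dsum (-J - j) (J - j) fun k => 1 / Q k := by
    rw [← dsum_const_mul]
    exact dsum_mono fun k _ => by
      rw [mul_one_div]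
      exact div_le_div_of_nonneg_right (hV _) (by positivity)
  rw [← sub_nonneg]
  have hdiff : RabsDiag α ε h J j * M - RabsInflow α ε h J V j = ε * Cconst α *
      (-zetaR (α - 1) * h ^ (-α) * ((M - V (j - 1)) + (M - V (j + 1)))
        + ((1 + j * h) ^ (-α) + (1 - j * h) ^ (-α)) / α * M
        + h * (M * (dsum (-J - j) (J - j) fun k => 1 / Q k)
          - dsum (-J - j) (J - j) fun k => V (j + k) / Q k)) := by
    simp only [RabsDiag, RabsInflow, Q]
    ring
  rw [hdiff]
  have := hV (j - 1)
  have := hV (j + 1)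
  exact mul_nonneg hc (add_nonneg (add_nonneg (mul_nonneg (mul_nonneg (neg_nonneg.2 hz)
    (Real.rpow_nonneg hh _)) (by linarith)) (mul_nonneg hA hM))
    (mul_nonneg hh (sub_nonneg.2 hdsum)))

lemma RabsDiag_le (hα : 0 < α) (hc : 0 ≤ ε * Cconst α) (hh : h = 1 / J) (hj : |j| < J) :
    RabsDiag α ε h J j ≤ 2 * ε * Cconst α * (1 + 1 / α - zetaR (α - 1)) * h ^ (-α) := by
  obtain ⟨hj1, hj2⟩ := abs_lt.1 hj
  have hJ : (0 : ℝ) < J := by exact_mod_cast (show (0 : ℤ) < J by omega)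
  have hh0 : 0 < h := by rw [hh]; positivity
  have hplus : 1 + (j : ℝ) * h = ((J + j : ℤ) : ℝ) * h := by
    rw [hh]; push_cast; field_simp
  have hminus : 1 - (j : ℝ) * h = ((J - j : ℤ) : ℝ) * h := by
    rw [hh]; push_cast; field_simp
  have hsum := mul_dsum_inv_abs_rpow_le (α := α) hh0 (a := J + j) (b := J - j)
    (by omega) (by omega)
  rw [neg_add'] at hsum
  have h1 := sum_Icc_rpow_neg_add_le hα (K := J + j) (by omega)
  have h2 := sum_Icc_rpow_neg_add_le hα (K := J - j) (by omega)
  have hH : 0 ≤ h ^ (-α) := Real.rpow_nonneg hh0.le _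
  have key := mul_le_mul_of_nonneg_right (add_le_add h1 h2) hH
  rw [RabsDiag, hplus, hminus,
    Real.mul_rpow (by exact_mod_cast (by omega : (0 : ℤ) ≤ J + j)) hh0.le,
    Real.mul_rpow (by exact_mod_cast (by omega : (0 : ℤ) ≤ J - j)) hh0.le]
  refine (mul_le_mul_of_nonneg_left ?_ hc).trans_eq (by ring :
    ε * Cconst α * (2 * (1 + 1 / α - zetaR (α - 1)) * h ^ (-α)) = _)
  linear_combination key + hsum

lemma mul_RabsDiag_le_one (hα : 0 < α) (hα2 : α < 2) (hε : 0 < ε) (hh : h = 1 / J)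
    (hj : |j| < J) {Δt : ℝ} (hΔt : 0 ≤ Δt)
    (hCFL : Δt / h ^ α ≤ 1 / (2 * ε * Cconst α * (1 + 1 / α - zetaR (α - 1)))) :
    Δt * RabsDiag α ε h J j ≤ 1 := by
  have hC := Cconst_pos hα hα2
  have hz := zetaR_neg (s := α - 1) (by linarith) (by linarith)
  have hh0 : 0 < h := by
    rw [hh]
    exact one_div_pos.2 (by exact_mod_cast (abs_nonneg j).trans_lt hj)
  have hhα : 0 < h ^ α := Real.rpow_pos_of_pos hh0 α
  have hX : 0 < 2 * ε * Cconst α * (1 + 1 / α - zetaR (α - 1)) := by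
    have : 0 < 1 / α := one_div_pos.2 hα
    have : 0 < 1 + 1 / α - zetaR (α - 1) := by linarith
    positivity
  rw [div_le_div_iff₀ hhα hX, one_mul] at hCFL
  calc Δt * RabsDiag α ε h J j
      ≤ Δt * (2 * ε * Cconst α * (1 + 1 / α - zetaR (α - 1)) * h ^ (-α)) :=
        mul_le_mul_of_nonneg_left (RabsDiag_le hα (mul_pos hε hC).le hh hj) hΔt
    _ = Δt * (2 * ε * Cconst α * (1 + 1 / α - zetaR (α - 1))) / h ^ α := by
        rw [Real.rpow_neg hh0.le]; ring
    _ ≤ 1 := (div_le_one hhα).2 hCFL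

end Rabs

lemma add_mul_sub_mul_mem_Icc {v N D Δt M : ℝ} (hv : v ∈ Set.Icc 0 M) (hN : 0 ≤ N)
    (hNM : N ≤ D * M) (hΔt : 0 ≤ Δt) (hD : Δt * D ≤ 1) :
    v + Δt * (N - D * v) ∈ Set.Icc 0 M := by
  obtain ⟨hv0, hvM⟩ := hv
  have h1 : 0 ≤ 1 - Δt * D := by linarith
  constructor
  · nlinarith [mul_nonneg h1 hv0, mul_nonneg hΔt hN]
  · nlinarith [mul_le_mul_of_nonneg_left hvM h1, mul_le_mul_of_nonneg_left hNM hΔt]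

def gridBox (J : ℤ) (M : ℝ) : Set (ℤ → ℝ) :=
  {V | ∀ j, (J ≤ |j| → V j = 0) ∧ V j ∈ Set.Icc 0 M}

lemma convex_gridBox (J : ℤ) (M : ℝ) : Convex ℝ (gridBox J M) := by
  intro V hV W hW a b ha hb hab j
  refine ⟨fun hj => by simp [(hV j).1 hj, (hW j).1 hj], ?_⟩
  simpa using convex_Icc (0 : ℝ) M (hV j).2 (hW j).2 ha hb hab

lemma euler_mem_gridBox {α ε h Δt M : ℝ} {J : ℤ} (hα : 0 < α) (hα2 : α < 2)
    (hε : 0 < ε) (hh : h = 1 / J) (hΔt : 0 ≤ Δt)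
    (hCFL : Δt / h ^ α ≤ 1 / (2 * ε * Cconst α * (1 + 1 / α - zetaR (α - 1))))
    {V : ℤ → ℝ} (hV : V ∈ gridBox J M) :
    (fun j => V j + Δt * Rabs α ε h J V j) ∈ gridBox J M := by
  intro j
  have hM : 0 ≤ M := (hV j).2.1.trans (hV j).2.2
  by_cases hj : |j| < J
  · refine ⟨fun hj' => absurd hj hj'.not_gt, ?_⟩
    have hc : 0 ≤ ε * Cconst α := (mul_pos hε (Cconst_pos hα hα2)).le
    have hz : zetaR (α - 1) ≤ 0 := (zetaR_neg (by linarith) (by linarith)).le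
    have hJ : (0 : ℝ) < J := by exact_mod_cast (abs_nonneg j).trans_lt hj
    have hh0 : 0 ≤ h := by rw [hh]; positivity
    have hjh : |(j : ℝ) * h| ≤ 1 := by
      rw [hh, abs_mul, abs_of_pos (one_div_pos.2 hJ), mul_one_div, div_le_one hJ, ← Int.cast_abs]
      exact_mod_cast hj.le
    show V j + Δt * Rabs α ε h J V j ∈ Set.Icc 0 M
    rw [Rabs_eq_inflow_sub_diag V hj]
    exact add_mul_sub_mul_mem_Icc (hV j).2 (RabsInflow_nonneg hc hz hh0 fun k => (hV k).2.1)
      (RabsInflow_le hα hc hz hh0 hjh hM fun k => (hV k).2.2) hΔt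
      (mul_RabsDiag_le_one hα hα2 hε hh hj hΔt hCFL)
  · have hj' := not_lt.1 hj
    simp [Rabs_of_le_abs V hj', (hV j).1 hj', hM]

theorem stmt_2_general (α ε h Δt M : ℝ) (J : ℤ)
    (hα : 0 < α) (hα2 : α < 2) (hε : 0 < ε)
    (hh : h = 1 / (J : ℝ)) (hΔt : 0 < Δt)
    (P : ℕ → ℤ → ℝ) (U1 U2 : ℕ → ℤ → ℝ)
    (hbc0 : ∀ j : ℤ, J ≤ |j| → P 0 j = 0)
    (hU1 : ∀ n : ℕ, ∀ j : ℤ, U1 n j = P n j + Δt * Rabs α ε h J (P n) j)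
    (hU2 : ∀ n : ℕ, ∀ j : ℤ, U2 n j =
      3 / 4 * P n j + 1 / 4 * U1 n j + 1 / 4 * Δt * Rabs α ε h J (U1 n) j)
    (hP : ∀ n : ℕ, ∀ j : ℤ, P (n + 1) j =
      1 / 3 * P n j + 2 / 3 * U2 n j + 2 / 3 * Δt * Rabs α ε h J (U2 n) j)
    (hCFL : Δt / h ^ α ≤ 1 / (2 * ε * Cconst α * (1 + 1 / α - zetaR (α - 1))))
    (hinit : ∀ j : ℤ, 0 ≤ P 0 j ∧ P 0 j ≤ M) :
    ∀ n : ℕ, ∀ j : ℤ, 0 ≤ P n j ∧ P n j ≤ M := by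
  have hstep {V : ℤ → ℝ} (hV : V ∈ gridBox J M) :
      (fun j => V j + Δt * Rabs α ε h J V j) ∈ gridBox J M :=
    euler_mem_gridBox hα hα2 hε hh hΔt.le hCFL hV
  have hconv := convex_gridBox J M
  suffices hPn : ∀ n, P n ∈ gridBox J M from fun n j => (hPn n j).2
  intro n
  induction n with
  | zero => exact fun j => ⟨hbc0 j, hinit j⟩
  | succ n ih =>
    have h1 : U1 n ∈ gridBox J M := by
      simpa only [← funext (hU1 n)] using hstep ih
    have h2 : U2 n ∈ gridBox J M := by
      convert hconv ih (hstep h1) (a := 3 / 4) (b := 1 / 4) (by norm_num) (by norm_num)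
        (by norm_num) using 1
      ext j
      simp only [hU2, Pi.add_apply, Pi.smul_apply, smul_eq_mul]
      ring
    convert hconv ih (hstep h2) (a := 1 / 3) (b := 2 / 3) (by norm_num) (by norm_num)
      (by norm_num) using 1
    ext j
    simp only [hP, Pi.add_apply, Pi.smul_apply, smul_eq_mul]
    ring

/-- Discrete maximum principle for the third-order TVD Runge-Kutta discretization of
the semi-discrete scheme with the absorbing condition. -/
theorem stmt_2 (α ε h Δt M : ℝ) (J : ℤ)
    (hα : 0 < α) (hα2 : α < 2) (hε : 0 < ε) (hJ : 1 ≤ J)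
    (hh : h = 1 / (J : ℝ)) (hΔt : 0 < Δt)
    (P : ℕ → ℤ → ℝ) (U1 U2 : ℕ → ℤ → ℝ)
    (hbc0 : ∀ j : ℤ, J ≤ |j| → P 0 j = 0)
    (hU1 : ∀ n : ℕ, ∀ j : ℤ, U1 n j = P n j + Δt * Rabs α ε h J (P n) j)
    (hU2 : ∀ n : ℕ, ∀ j : ℤ, U2 n j =
      3 / 4 * P n j + 1 / 4 * U1 n j + 1 / 4 * Δt * Rabs α ε h J (U1 n) j)
    (hP : ∀ n : ℕ, ∀ j : ℤ, P (n + 1) j =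
      1 / 3 * P n j + 2 / 3 * U2 n j + 2 / 3 * Δt * Rabs α ε h J (U2 n) j)
    (hCFL : Δt / h ^ α ≤ 1 / (2 * ε * Cconst α * (1 + 1 / α - zetaR (α - 1))))
    (hM : 0 ≤ M)
    (hinit : ∀ j : ℤ, 0 ≤ P 0 j ∧ P 0 j ≤ M) :
    ∀ n : ℕ, ∀ j : ℤ, 0 ≤ P n j ∧ P n j ≤ M :=
  stmt_2_general α ε h Δt M J hα hα2 hε hh hΔt P U1 U2 hbc0 hU1 hU2 hP hCFL hinit
end

section
/- For every integer j with |j| < J (where h = 1/J), the following estimate holds: h Σ''_{k=−J−j, k≠0}^{J−j} 1/|kh|^{1+α} + (1/α)[(1+jh)^{−α} + (1−jh)^{−α}] ≤ (2/h^α)(1 + 1/α). -/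
open scoped BigOperators

/-!
Dropping the half weights only increases the sum, and reflecting `k ↦ -k` splits it into two
one-sided sums `h ∑_{k=1}^{N} (kh)^{-1-α}` with `N = J ± j`, so that `Nh = 1 ± jh`. Each of these
is a right-endpoint Riemann sum of the decreasing function `x^{-1-α}`: its first term is `h^{-α}`,
and by the mean value theorem every later term is at most `∫_{(k-1)h}^{kh} x^{-1-α} dx`, so the
sum telescopes to at most `h^{-α} + (h^{-α} - (Nh)^{-α})/α`.
-/

open Finset Real

lemma mul_sub_mul_rpow_le_rpow_neg_sub {α a b : ℝ} (hα : 0 ≤ α) (ha : 0 < a) (hab : a < b) :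
    α * (b - a) * b ^ (-α - 1) ≤ a ^ (-α) - b ^ (-α) := by
  obtain ⟨c, ⟨hac, hcb⟩, hc⟩ := exists_hasDerivAt_eq_slope (fun x : ℝ ↦ x ^ (-α))
    (fun x ↦ -α * x ^ (-α - 1)) hab
    (fun x hx ↦ (continuousAt_rpow_const x _ (.inl (ha.trans_le hx.1).ne')).continuousWithinAt)
    (fun x hx ↦ hasDerivAt_rpow_const (.inl (ha.trans hx.1).ne'))
  have hbc : b ^ (-α - 1) ≤ c ^ (-α - 1) :=
    rpow_le_rpow_of_nonpos (ha.trans hac) hcb.le (by linarith)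
  rw [eq_div_iff (sub_pos.2 hab).ne'] at hc
  nlinarith [mul_le_mul_of_nonneg_left hbc (mul_nonneg hα (sub_pos.2 hab).le)]

lemma mul_sum_Icc_rpow_add_le {α h : ℝ} (hα : 0 < α) (hh : 0 < h) {N : ℤ} (hN : 1 ≤ N) :
    h * ∑ k ∈ Icc 1 N, ((k : ℝ) * h) ^ (-α - 1) + 1 / α * ((N : ℝ) * h) ^ (-α)
      ≤ 1 / h ^ α * (1 + 1 / α) := by
  induction N, hN using Int.leInduction with
  | base =>
    have : h * h ^ (-α - 1) = h ^ (-α) := by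
      rw [rpow_sub_one hh.ne', mul_div_cancel₀ _ hh.ne']
    simp only [Icc_self, sum_singleton, Int.cast_one, one_mul, this, rpow_neg hh.le]
    exact le_of_eq (by ring)
  | succ N hN ih =>
    set x := (N : ℝ) * h
    have hmvt := mul_sub_mul_rpow_le_rpow_neg_sub hα.le (by positivity : 0 < x)
      (by linarith : x < x + h)
    rw [add_sub_cancel_left] at hmvt
    have hstep : h * (x + h) ^ (-α - 1) ≤ 1 / α * x ^ (-α) - 1 / α * (x + h) ^ (-α) := by
      rw [← mul_sub, div_mul_eq_mul_div, one_mul, le_div_iff₀ hα]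
      linarith
    rw [← insert_Icc_right_eq_Icc_add_one (by omega), sum_insert (by simp), mul_add]
    push_cast
    rw [add_mul, one_mul]
    linarith

lemma dsum_le_sum_erase_zero {a b : ℤ} {g : ℤ → ℝ} (hg : ∀ k, 0 ≤ g k) :
    dsum a b g ≤ ∑ k ∈ (Icc a b).erase 0, g k := by
  refine sum_le_sum fun k _ ↦ ?_
  split_ifs
  · linarith [hg k]
  · rw [one_mul]

lemma sum_Icc_neg_erase_zero {M N : ℤ} (hM : 0 ≤ M) (hN : 0 ≤ N) (f : ℤ → ℝ) :
    ∑ k ∈ (Icc (-M) N).erase 0, f k = ∑ k ∈ Icc 1 M, f (-k) + ∑ k ∈ Icc 1 N, f k := by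
  have hsplit : (Icc (-M) N).erase 0 = Icc (-M) (-1) ∪ Icc 1 N := by
    ext k
    simp only [mem_erase, mem_Icc, mem_union]
    omega
  rw [hsplit, sum_union (disjoint_left.2 fun k hk hk' ↦ by simp only [mem_Icc] at hk hk'; omega)]
  congr 1
  refine sum_nbij' (fun k ↦ -k) (fun k ↦ -k) ?_ ?_ (fun k _ ↦ neg_neg k) (fun k _ ↦ neg_neg k)
    (fun k _ ↦ by rw [neg_neg])
  all_goals intro k hk; simp only [mem_Icc] at hk ⊢; omega

theorem stmt_5_general (α : ℝ) (J : ℤ) (h : ℝ)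
    (hα : 0 < α) (hh : h = 1 / (J : ℝ)) :
    ∀ j : ℤ, |j| < J →
      h * dsum (-J - j) (J - j) (fun k => 1 / |(k : ℝ) * h| ^ (1 + α))
          + 1 / α * ((1 + (j : ℝ) * h) ^ (-α) + (1 - (j : ℝ) * h) ^ (-α))
        ≤ 2 / h ^ α * (1 + 1 / α) := by
  intro j hj
  obtain ⟨hjl, hju⟩ := abs_lt.mp hj
  have hJ : (0 : ℝ) < J := by exact_mod_cast (abs_nonneg j).trans_lt hj
  have hh0 : 0 < h := by rw [hh]; positivity
  have hJh : (J : ℝ) * h = 1 := by rw [hh]; field_simp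
  have hsummand : ∀ k : ℤ, 1 ≤ k → 1 / |(k : ℝ) * h| ^ (1 + α) = ((k : ℝ) * h) ^ (-α - 1) := by
    intro k hk
    have : (0 : ℝ) < k * h := mul_pos (by exact_mod_cast hk) hh0
    rw [abs_of_pos this, one_div, ← rpow_neg this.le, neg_add', neg_sub_comm]
  have hsum : dsum (-J - j) (J - j) (fun k => 1 / |(k : ℝ) * h| ^ (1 + α))
      ≤ ∑ k ∈ Icc 1 (J + j), ((k : ℝ) * h) ^ (-α - 1)
        + ∑ k ∈ Icc 1 (J - j), ((k : ℝ) * h) ^ (-α - 1) := by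
    refine (dsum_le_sum_erase_zero fun k ↦ by positivity).trans_eq ?_
    rw [show -J - j = -(J + j) by ring, sum_Icc_neg_erase_zero (by omega) (by omega)]
    congr 1 <;> refine sum_congr rfl fun k hk ↦ ?_ <;> rw [mem_Icc] at hk
    · rw [Int.cast_neg, neg_mul, abs_neg, hsummand k hk.1]
    · exact hsummand k hk.1
  have hplus := mul_sum_Icc_rpow_add_le hα hh0 (N := J + j) (by omega)
  have hminus := mul_sum_Icc_rpow_add_le hα hh0 (N := J - j) (by omega)
  push_cast at hplus hminus
  rw [add_mul, hJh] at hplus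
  rw [sub_mul, hJh] at hminus
  have hrhs : 2 / h ^ α * (1 + 1 / α) = 2 * (1 / h ^ α * (1 + 1 / α)) := by ring
  linarith [mul_le_mul_of_nonneg_left hsum hh0.le]

/-- The key quadrature estimate for the absorbing scheme. -/
theorem stmt_5 (α : ℝ) (J : ℤ) (h : ℝ)
    (hα : 0 < α) (hα2 : α < 2) (hJ : 1 ≤ J) (hh : h = 1 / (J : ℝ)) :
    ∀ j : ℤ, |j| < J →
      h * dsum (-J - j) (J - j) (fun k => 1 / |(k : ℝ) * h| ^ (1 + α))
          + 1 / α * ((1 + (j : ℝ) * h) ^ (-α) + (1 - (j : ℝ) * h) ^ (-α))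
        ≤ 2 / h ^ α * (1 + 1 / α) :=
  stmt_5_general α J h hα hh
end

section
/- For every real number s with −1 < s < 1, the value ζ(s) of the Riemann zeta function is a negative real number; that is, ζ(s) has zero imaginary part and Re ζ(s) < 0. -/
/-!
For `0 < s < 1` we pass through the Dirichlet eta function `η(s) = (1 - 2^(1-s)) ζ(s)`. It is
entire, and on `re s > 0` it is the sum of the pairs `(2k+1)^(-s) - (2k+2)^(-s)`: these are
bounded by `‖s‖ (2k+1)^(-re s - 1)` (mean value theorem), so the sum is holomorphic there and
agrees with `η` by the identity theorem. For real `s > 0` every pair is positive, so `η(s) > 0`,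
while `1 - 2^(1-s) < 0`. For `-1 < s < 0` the functional equation writes `ζ(s)` as
`2 (2π)^(s-1) Γ(1-s) cos(π(1-s)/2) ζ(1-s)`, where only the cosine is negative; `ζ(0) = -1/2`.

Signs are taken in `ComplexOrder`, in which `z < 0` means that `z` is a negative real number.
-/

open Complex
open scoped ComplexOrder

lemma HasSum.pair_add {E : Type*} [NormedAddCommGroup E] [CompleteSpace E] {f : ℕ → E} {a : E}
    (h : HasSum f a) : HasSum (fun k => f (2 * k) + f (2 * k + 1)) a := by
  have he : Summable fun k => f (2 * k) :=
    h.summable.comp_injective fun i j hij => by omega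
  have ho : Summable fun k => f (2 * k + 1) :=
    h.summable.comp_injective fun i j hij => by omega
  convert he.hasSum.add ho.hasSum
  exact ((tsum_even_add_odd he ho).trans h.tsum_eq).symm

lemma ofReal_cpow_ofReal_pos {a : ℝ} (ha : 0 < a) (y : ℝ) : 0 < (a : ℂ) ^ (y : ℂ) := by
  rw [← ofReal_cpow ha.le]
  exact zero_lt_real.mpr (Real.rpow_pos_of_pos ha y)

lemma norm_ofReal_cpow_neg_sub_le {s : ℂ} (hs : -1 ≤ s.re) {a b : ℝ}
    (ha : 0 < a) (hab : a ≤ b) :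
    ‖(a : ℂ) ^ (-s) - (b : ℂ) ^ (-s)‖ ≤ ‖s‖ * a ^ (-s.re - 1) * (b - a) := by
  have hderiv : ∀ t ∈ Set.Icc a b, HasDerivWithinAt (fun t : ℝ => (t : ℂ) ^ (-s))
      (-s * (t : ℂ) ^ (-s - 1)) (Set.Icc a b) t := fun t ht =>
    (hasStrictDerivAt_cpow_const (ofReal_mem_slitPlane.2 (ha.trans_le ht.1))).hasDerivAt
      |>.comp_ofReal.hasDerivWithinAt
  have hbound :
      ∀ t ∈ Set.Icc a b, ‖-s * (t : ℂ) ^ (-s - 1)‖ ≤ ‖s‖ * a ^ (-s.re - 1) := by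
    intro t ht
    rw [norm_mul, norm_neg, norm_cpow_eq_rpow_re_of_pos (ha.trans_le ht.1)]
    gcongr
    simpa using Real.rpow_le_rpow_of_nonpos ha ht.1 (by linarith : -s.re - 1 ≤ 0)
  rw [norm_sub_rev]
  simpa [Real.norm_eq_abs, abs_of_nonneg (sub_nonneg.2 hab)] using
    (convex_Icc a b).norm_image_sub_le_of_norm_hasDerivWithin_le hderiv hbound
      (Set.left_mem_Icc.2 hab) (Set.right_mem_Icc.2 hab)

lemma summable_odd_rpow {p : ℝ} (hp : p < -1) :
    Summable fun k : ℕ => ((2 * k + 1 : ℕ) : ℝ) ^ p :=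
  (Real.summable_nat_rpow.mpr hp).comp_injective fun i j hij => by omega

noncomputable def etaSign : ZMod 2 → ℂ := fun j => if j = 0 then -1 else 1

noncomputable def dirichletEta (s : ℂ) : ℂ := ZMod.LFunction etaSign s

lemma etaSign_natCast (n : ℕ) : etaSign n = if Even n then -1 else 1 := by
  simp [etaSign, ZMod.natCast_eq_zero_iff_even]

lemma differentiable_dirichletEta : Differentiable ℂ dirichletEta :=
  ZMod.differentiable_LFunction_of_sum_zero <| by
    simp [etaSign, show (Finset.univ : Finset (ZMod 2)) = {0, 1} from rfl]

/-- `etaSign` is the trivial character mod 2 minus the indicator of `0`, whose L-functions are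
`(1 - 2^(-s)) ζ(s)` and `2^(-s) ζ(s)`. -/
lemma dirichletEta_eq_mul_riemannZeta {s : ℂ} (hs : s ≠ 1) :
    dirichletEta s = (1 - 2 ^ (1 - s)) * riemannZeta s := by
  have h := DirichletCharacter.LFunctionTrivChar_eq_mul_riemannZeta (N := 2) hs
  simp only [dirichletEta, DirichletCharacter.LFunctionTrivChar, DirichletCharacter.LFunction,
    ZMod.LFunction] at h ⊢
  have huniv : (Finset.univ : Finset (ZMod 2)) = {0, 1} := rfl
  simp only [Nat.cast_ofNat, huniv, Finset.mem_singleton, zero_ne_one, not_false_eq_true,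
    Finset.sum_insert, MulChar.map_zero, map_zero, HurwitzZeta.hurwitzZeta_zero, zero_mul,
    Finset.sum_singleton, map_one, one_mul, zero_add, Nat.Prime.primeFactors Nat.prime_two,
    Finset.prod_singleton, etaSign, ite_mul, neg_mul, ↓reduceIte, one_ne_zero] at h ⊢
  rw [sub_eq_add_neg 1 s, cpow_add _ _ two_ne_zero, cpow_one]
  linear_combination h

noncomputable def etaPair (k : ℕ) (s : ℂ) : ℂ :=
  ((2 * k + 1 : ℕ) : ℂ) ^ (-s) - ((2 * k + 2 : ℕ) : ℂ) ^ (-s)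

lemma etaPair_eq_term_add_term (k : ℕ) (s : ℂ) :
    etaPair k s =
      LSeries.term (etaSign ·) s (2 * k + 1) + LSeries.term (etaSign ·) s (2 * k + 2) := by
  rw [LSeries.term_of_ne_zero (by omega), LSeries.term_of_ne_zero (by omega), etaSign_natCast,
    etaSign_natCast, etaPair, cpow_neg, cpow_neg]
  simp [parity_simps, div_eq_mul_inv, sub_eq_add_neg]

lemma hasSum_etaPair {s : ℂ} (hs : 1 < s.re) : HasSum (etaPair · s) (dirichletEta s) := by
  have hL : HasSum (LSeries.term (etaSign ·) s) (dirichletEta s) := by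
    rw [dirichletEta, ZMod.LFunction_eq_LSeries _ hs]
    exact (ZMod.LSeriesSummable_of_one_lt_re _ hs).hasSum
  have hpairs := ((hasSum_nat_add_iff' 1).mpr hL).pair_add
  simp only [Finset.sum_range_one, LSeries.term_zero, sub_zero] at hpairs
  exact hpairs.congr_fun fun k => etaPair_eq_term_add_term k s

lemma norm_etaPair_le {s : ℂ} (hs : -1 ≤ s.re) (k : ℕ) :
    ‖etaPair k s‖ ≤ ‖s‖ * ((2 * k + 1 : ℕ) : ℝ) ^ (-s.re - 1) := by
  have h := norm_ofReal_cpow_neg_sub_le hs (a := (2 * k + 1 : ℕ)) (b := (2 * k + 2 : ℕ))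
    (by positivity) (by push_cast; linarith)
  rw [show ((2 * k + 2 : ℕ) : ℝ) - (2 * k + 1 : ℕ) = 1 by push_cast; ring, mul_one] at h
  simpa [etaPair] using h

lemma summable_etaPair {s : ℂ} (hs : 0 < s.re) : Summable (etaPair · s) :=
  .of_norm_bounded ((summable_odd_rpow (by linarith)).mul_left ‖s‖)
    (norm_etaPair_le (by linarith))

lemma differentiableOn_tsum_etaPair {a R : ℝ} (ha : 0 < a) :
    DifferentiableOn ℂ (fun s => ∑' k, etaPair k s) ({s | a < s.re} ∩ Metric.ball 0 R) := by
  refine differentiableOn_tsum_of_summable_norm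
    ((summable_odd_rpow (p := -a - 1) (by linarith)).mul_left R) (fun k => ?_)
    ((isOpen_lt continuous_const continuous_re).inter Metric.isOpen_ball)
    fun k s ⟨(hsa : a < s.re), hsR⟩ => ?_
  · exact ((differentiable_neg.const_cpow (.inl (by positivity))).sub
      (differentiable_neg.const_cpow (.inl (by positivity)))).differentiableOn
  · rw [mem_ball_zero_iff] at hsR
    refine (norm_etaPair_le (by linarith) k).trans
      (mul_le_mul hsR.le ?_ (by positivity) ((norm_nonneg s).trans hsR.le))
    exact Real.rpow_le_rpow_of_exponent_le (by simp) (by linarith)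

lemma dirichletEta_eq_tsum_etaPair {s : ℂ} (hs : 0 < s.re) :
    dirichletEta s = ∑' k, etaPair k s := by
  set a := min (s.re / 2) 1
  set U := {z : ℂ | a < z.re} ∩ Metric.ball 0 (‖s‖ + 3)
  have hU : IsOpen U := (isOpen_lt continuous_const continuous_re).inter Metric.isOpen_ball
  have hsU : s ∈ U := ⟨show a < s.re from min_lt_of_left_lt (by linarith), by simp⟩
  have h2U : (2 : ℂ) ∈ U :=
    ⟨show a < (2 : ℂ).re from min_lt_of_right_lt (by norm_num),
      by simp only [Metric.mem_ball, dist_zero_right, norm_ofNat]; linarith [norm_nonneg s]⟩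
  have hnhds : {z : ℂ | 1 < z.re} ∈ nhds (2 : ℂ) :=
    (isOpen_lt continuous_const continuous_re).mem_nhds (by norm_num)
  refine (differentiable_dirichletEta.differentiableOn.analyticOnNhd hU)
    |>.eqOn_of_preconnected_of_eventuallyEq
      ((differentiableOn_tsum_etaPair (lt_min (by linarith) one_pos)).analyticOnNhd hU)
      ((convex_halfSpace_re_gt _).inter (convex_ball _ _)).isPreconnected h2U
      (Filter.eventually_of_mem hnhds fun z hz => (hasSum_etaPair hz).tsum_eq.symm) hsU

lemma etaPair_ofReal_pos {x : ℝ} (hx : 0 < x) (k : ℕ) : 0 < etaPair k x := by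
  have h (n : ℕ) : (n : ℂ) ^ (-(x : ℂ)) = (((n : ℝ) ^ (-x) : ℝ) : ℂ) := by
    rw [ofReal_cpow n.cast_nonneg, ofReal_natCast, ofReal_neg]
  rw [etaPair, h, h, sub_pos, real_lt_real]
  exact Real.rpow_lt_rpow_of_neg (by positivity) (by push_cast; linarith) (by linarith)

lemma dirichletEta_ofReal_pos {x : ℝ} (hx : 0 < x) : 0 < dirichletEta x := by
  rw [dirichletEta_eq_tsum_etaPair (by simpa)]
  exact (summable_etaPair (by simpa)).tsum_pos (fun k => (etaPair_ofReal_pos hx k).le) 0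
    (etaPair_ofReal_pos hx 0)

lemma riemannZeta_neg_of_pos_of_lt_one {x : ℝ} (h0 : 0 < x) (h1 : x < 1) :
    riemannZeta x < 0 := by
  have hx1 : (x : ℂ) ≠ 1 := by exact_mod_cast h1.ne
  set c : ℝ := 1 - 2 ^ (1 - x)
  have hc : (1 : ℂ) - 2 ^ (1 - (x : ℂ)) = c := by
    rw [ofReal_sub, ofReal_one, ofReal_cpow two_pos.le]; push_cast; rfl
  have hc_neg : c < 0 := sub_neg.mpr (Real.one_lt_rpow one_lt_two (by linarith))
  have hζ : riemannZeta x = (c⁻¹ : ℝ) * dirichletEta x := by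
    rw [dirichletEta_eq_mul_riemannZeta hx1, hc, ofReal_inv,
      inv_mul_cancel_left₀ (by exact_mod_cast hc_neg.ne)]
  rw [hζ]
  exact mul_neg_of_neg_of_pos (real_lt_real.mpr (inv_lt_zero.mpr hc_neg))
    (dirichletEta_ofReal_pos h0)

lemma riemannZeta_neg_of_neg_one_lt_of_neg {s : ℝ} (h1 : -1 < s) (h0 : s < 0) :
    riemannZeta s < 0 := by
  set t : ℝ := 1 - s
  have hfe := riemannZeta_one_sub (s := t) (fun n hn => by
      have := congrArg re hn
      simp only [ofReal_re, neg_re, natCast_re] at this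
      linarith [n.cast_nonneg (α := ℝ)])
    (by exact_mod_cast (by linarith : t ≠ 1))
  rw [show 1 - (t : ℂ) = s by push_cast [t]; ring] at hfe
  rw [hfe]
  have hpow : 0 < (2 * Real.pi : ℂ) ^ (-(t : ℂ)) := by
    exact_mod_cast ofReal_cpow_ofReal_pos (by positivity : 0 < 2 * Real.pi) (-t)
  have hΓ : 0 < Gamma t := by
    rw [Gamma_ofReal]; exact zero_lt_real.mpr (Real.Gamma_pos_of_pos (by linarith))
  have hcos : cos (Real.pi * t / 2) < 0 := by
    rw [show (Real.pi : ℂ) * t / 2 = ((Real.pi * t / 2 : ℝ) : ℂ) by push_cast; rfl,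
      ← ofReal_cos]
    refine real_lt_real.mpr (Real.cos_neg_of_pi_div_two_lt_of_lt ?_ ?_) <;>
      nlinarith [Real.pi_pos]
  exact mul_neg_of_neg_of_pos (mul_neg_of_pos_of_neg (mul_pos (mul_pos two_pos hpow) hΓ) hcos)
    (riemannZeta_pos_of_one_lt (by linarith))

/-- For real `s` with `-1 < s < 1`, the Riemann zeta value `ζ(s)` is a negative real
number: it has zero imaginary part and negative real part. -/
theorem stmt_11 (s : ℝ) (h1 : -1 < s) (h2 : s < 1) :
    (riemannZeta (s : ℂ)).im = 0 ∧ (riemannZeta (s : ℂ)).re < 0 := by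
  have hneg : riemannZeta s < 0 := by
    rcases lt_trichotomy s 0 with hs | rfl | hs
    · exact riemannZeta_neg_of_neg_one_lt_of_neg h1 hs
    · rw [ofReal_zero, riemannZeta_zero]; norm_num
    · exact riemannZeta_neg_of_pos_of_lt_one hs h2
  exact (Complex.neg_iff.mp hneg).symm
end

section
/- Let p(x,t) = t/(π(t² + x²)). For every t > 0 and every x ∈ ℝ, the function y ↦ (p(x+y,t) + p(x−y,t) − 2p(x,t))/y² is integrable on (0,∞) and the partial derivative of p with respect to t satisfies ∂p/∂t(x,t) = (1/π) ∫₀^∞ (p(x+y,t) + p(x−y,t) − 2p(x,t))/y² dy. (This is the verification that the Cauchy density solves the nonlocal Fokker-Planck equation with d = 0, f = 0, ε = 1 and α = 1, where the fractional Laplacian term is written in symmetrized integral form.) -/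
/-!
Write `s = t² + x²`. Over a common denominator the symmetrized quotient is the rational function
`2t(3x² - t² - y²) / (π s (t² + (x+y)²)(t² + (x-y)²))`, which has no singularity at `y = 0` and
is `O(1/y²)` at infinity, so it is integrable. Partial fractions give it an explicit primitive in
terms of `log (t² + (x ± y)²)` and `arctan ((x ± y)/t)`; the `log` part vanishes at `0` and at
`∞`, the `arctan` part jumps by `π`, so the integral over `(0, ∞)` is `(x² - t²)/s²`, which is
`π ∂ₜ p(x,t)`.
-/

open MeasureTheory

/-- The Cauchy density `p(x,t) = t/(π(t² + x²))`. -/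
noncomputable def cauchyP (x t : ℝ) : ℝ := t / (Real.pi * (t ^ 2 + x ^ 2))

open Filter Topology Real

noncomputable def cauchyIntegrand (x t y : ℝ) : ℝ :=
  (cauchyP (x + y) t + cauchyP (x - y) t - 2 * cauchyP x t) / y ^ 2

noncomputable def cauchyIntegrandClosed (x t y : ℝ) : ℝ :=
  2 * t * (3 * x ^ 2 - t ^ 2 - y ^ 2) /
    (π * ((t ^ 2 + x ^ 2) * ((t ^ 2 + (x + y) ^ 2) * (t ^ 2 + (x - y) ^ 2))))

noncomputable def cauchyIntegrandPrimitive (x t y : ℝ) : ℝ :=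
  t * x / (π * (t ^ 2 + x ^ 2) ^ 2) * (log (t ^ 2 + (x + y) ^ 2) - log (t ^ 2 + (x - y) ^ 2))
    + (x ^ 2 - t ^ 2) / (π * (t ^ 2 + x ^ 2) ^ 2) * (arctan ((x + y) / t) - arctan ((x - y) / t))

section

variable {x t : ℝ}

theorem hasDerivAt_cauchyP (ht : t ≠ 0) :
    HasDerivAt (fun s => cauchyP x s) ((x ^ 2 - t ^ 2) / (π * (t ^ 2 + x ^ 2) ^ 2)) t := by
  have hden : π * (t ^ 2 + x ^ 2) ≠ 0 := by positivity
  have hd : HasDerivAt (fun s => π * (s ^ 2 + x ^ 2)) (π * (2 * t)) t := by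
    simpa using ((hasDerivAt_pow 2 t).add_const (x ^ 2)).const_mul π
  exact ((hasDerivAt_id' t).fun_div hd hden).congr_deriv (by field_simp; ring)

theorem cauchyIntegrand_eq_closed (ht : t ≠ 0) {y : ℝ} (hy : y ≠ 0) :
    cauchyIntegrand x t y = cauchyIntegrandClosed x t y := by
  unfold cauchyIntegrand cauchyIntegrandClosed cauchyP
  have : t ^ 2 + (x + y) ^ 2 ≠ 0 := by positivity
  have : t ^ 2 + (x - y) ^ 2 ≠ 0 := by positivity
  field_simp
  ring

theorem continuous_cauchyIntegrandClosed (ht : t ≠ 0) : Continuous (cauchyIntegrandClosed x t) :=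
  Continuous.div (by fun_prop) (by fun_prop) fun y => by positivity

/-- The difference of the two sides is `x² (t² + x² - y²)²`, using
`(t² + (x + y)²)(t² + (x - y)²) = (t² + x² + y²)² - 4x²y²`. -/
theorem sq_mul_sq_le_mul_sq_add_sq (x t y : ℝ) :
    t ^ 2 * (t ^ 2 + x ^ 2 + y ^ 2) ^ 2 ≤
      (t ^ 2 + x ^ 2) * ((t ^ 2 + (x + y) ^ 2) * (t ^ 2 + (x - y) ^ 2)) := by
  nlinarith [sq_nonneg (x * (t ^ 2 + x ^ 2 - y ^ 2))]

theorem abs_cauchyIntegrandClosed_le (ht : 0 < t) (y : ℝ) :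
    |cauchyIntegrandClosed x t y| ≤ 6 / (π * t * (t ^ 2 + x ^ 2 + y ^ 2)) := by
  have hden : 0 < π * ((t ^ 2 + x ^ 2) * ((t ^ 2 + (x + y) ^ 2) * (t ^ 2 + (x - y) ^ 2))) := by
    positivity
  have hnum : |2 * t * (3 * x ^ 2 - t ^ 2 - y ^ 2)| ≤ 6 * t * (t ^ 2 + x ^ 2 + y ^ 2) := by
    rw [abs_le]; constructor <;> nlinarith [sq_nonneg x, sq_nonneg y, sq_nonneg t]
  rw [cauchyIntegrandClosed, abs_div, abs_of_pos hden, div_le_div_iff₀ hden (by positivity)]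
  calc |2 * t * (3 * x ^ 2 - t ^ 2 - y ^ 2)| * (π * t * (t ^ 2 + x ^ 2 + y ^ 2))
      ≤ 6 * t * (t ^ 2 + x ^ 2 + y ^ 2) * (π * t * (t ^ 2 + x ^ 2 + y ^ 2)) := by gcongr
    _ = 6 * π * (t ^ 2 * (t ^ 2 + x ^ 2 + y ^ 2) ^ 2) := by ring
    _ ≤ 6 * π * ((t ^ 2 + x ^ 2) * ((t ^ 2 + (x + y) ^ 2) * (t ^ 2 + (x - y) ^ 2))) := by
      gcongr 6 * π * ?_; exact sq_mul_sq_le_mul_sq_add_sq x t y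
    _ = 6 * (π * ((t ^ 2 + x ^ 2) * ((t ^ 2 + (x + y) ^ 2) * (t ^ 2 + (x - y) ^ 2)))) := by ring

theorem inv_add_sq_le_mul_inv_one_add_sq {a : ℝ} (ha : 0 < a) (y : ℝ) :
    (a + y ^ 2)⁻¹ ≤ (1 + a⁻¹) * (1 + y ^ 2)⁻¹ := by
  rw [← div_eq_mul_inv, inv_eq_one_div, div_le_div_iff₀ (by positivity) (by positivity)]
  nlinarith [inv_mul_cancel₀ ha.ne', mul_nonneg (inv_nonneg.2 ha.le) (sq_nonneg y)]

theorem integrable_cauchyIntegrandClosed (ht : 0 < t) :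
    Integrable (cauchyIntegrandClosed x t) := by
  have hs : 0 < t ^ 2 + x ^ 2 := by positivity
  refine (integrable_inv_one_add_sq.const_mul (6 / (π * t) * (1 + (t ^ 2 + x ^ 2)⁻¹))).mono'
    (continuous_cauchyIntegrandClosed ht.ne').aestronglyMeasurable
    (Eventually.of_forall fun y => ?_)
  calc ‖cauchyIntegrandClosed x t y‖ ≤ 6 / (π * t * (t ^ 2 + x ^ 2 + y ^ 2)) :=
        abs_cauchyIntegrandClosed_le ht y
    _ = 6 / (π * t) * (t ^ 2 + x ^ 2 + y ^ 2)⁻¹ := by field_simp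
    _ ≤ 6 / (π * t) * ((1 + (t ^ 2 + x ^ 2)⁻¹) * (1 + y ^ 2)⁻¹) := by
        gcongr; exact inv_add_sq_le_mul_inv_one_add_sq hs y
    _ = _ := by ring

theorem integrableOn_cauchyIntegrand (ht : 0 < t) :
    IntegrableOn (cauchyIntegrand x t) (Set.Ioi 0) :=
  (integrable_cauchyIntegrandClosed ht).integrableOn.congr_fun
    (fun _ hy => (cauchyIntegrand_eq_closed ht.ne' (ne_of_gt hy)).symm) measurableSet_Ioi

theorem hasDerivAt_cauchyIntegrandPrimitive (ht : t ≠ 0) (y : ℝ) :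
    HasDerivAt (cauchyIntegrandPrimitive x t) (cauchyIntegrandClosed x t y) y := by
  have hp : t ^ 2 + (x + y) ^ 2 ≠ 0 := by positivity
  have hm : t ^ 2 + (x - y) ^ 2 ≠ 0 := by positivity
  have hlog_p := ((((hasDerivAt_id' y).const_add x).fun_pow 2).const_add (t ^ 2)).log hp
  have hlog_m := ((((hasDerivAt_id' y).const_sub x).fun_pow 2).const_add (t ^ 2)).log hm
  have harctan_p := (((hasDerivAt_id' y).const_add x).div_const t).arctan
  have harctan_m := (((hasDerivAt_id' y).const_sub x).div_const t).arctan
  refine (((hlog_p.sub hlog_m).const_mul _).add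
    ((harctan_p.sub harctan_m).const_mul _)).congr_deriv ?_
  unfold cauchyIntegrandClosed
  field_simp
  ring

theorem cauchyIntegrandPrimitive_zero : cauchyIntegrandPrimitive x t 0 = 0 := by
  simp [cauchyIntegrandPrimitive]

/-- Substituting `z = 1 / y`, the difference is a function of `z` continuous at `0`. -/
theorem tendsto_log_sub_log_sq_add_sq (x t : ℝ) :
    Tendsto (fun y => log (t ^ 2 + (x + y) ^ 2) - log (t ^ 2 + (x - y) ^ 2)) atTop (𝓝 0) := by
  set g : ℝ → ℝ := fun z =>
    log ((t * z) ^ 2 + (x * z + 1) ^ 2) - log ((t * z) ^ 2 + (x * z - 1) ^ 2)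
  have hg : ContinuousAt g 0 := by
    refine ContinuousAt.sub ?_ ?_ <;> exact ContinuousAt.log (by fun_prop) (by simp)
  have hg0 : g 0 = 0 := by simp [g]
  refine (hg0 ▸ hg.tendsto.comp tendsto_inv_atTop_zero).congr' ?_
  filter_upwards [eventually_gt_atTop |x|] with y hy
  have hy0 : 0 < y := (abs_nonneg x).trans_lt hy
  have hp : 0 < t ^ 2 + (x + y) ^ 2 := by nlinarith [neg_abs_le x, sq_nonneg t]
  have hm : 0 < t ^ 2 + (x - y) ^ 2 := by nlinarith [le_abs_self x, sq_nonneg t]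
  have e₁ : (t * y⁻¹) ^ 2 + (x * y⁻¹ + 1) ^ 2 = (t ^ 2 + (x + y) ^ 2) / y ^ 2 := by
    field_simp
  have e₂ : (t * y⁻¹) ^ 2 + (x * y⁻¹ - 1) ^ 2 = (t ^ 2 + (x - y) ^ 2) / y ^ 2 := by
    field_simp
  simp only [Function.comp_apply, g, e₁, e₂]
  rw [log_div hp.ne' (by positivity), log_div hm.ne' (by positivity)]
  ring

theorem tendsto_arctan_sub_arctan (ht : 0 < t) :
    Tendsto (fun y => arctan ((x + y) / t) - arctan ((x - y) / t)) atTop (𝓝 π) := by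
  have hp : Tendsto (fun y => (x + y) / t) atTop atTop :=
    (tendsto_atTop_add_const_left _ x tendsto_id).atTop_div_const ht
  have hm : Tendsto (fun y => (x - y) / t) atTop atBot :=
    (tendsto_atBot_add_const_left _ x tendsto_neg_atTop_atBot).atBot_div_const ht
  have h := ((tendsto_arctan_atTop.mono_right nhdsWithin_le_nhds).comp hp).sub
    ((tendsto_arctan_atBot.mono_right nhdsWithin_le_nhds).comp hm)
  rwa [sub_neg_eq_add, add_halves] at h

theorem tendsto_cauchyIntegrandPrimitive_atTop (ht : 0 < t) :
    Tendsto (cauchyIntegrandPrimitive x t) atTop (𝓝 ((x ^ 2 - t ^ 2) / (t ^ 2 + x ^ 2) ^ 2)) := by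
  have hlim : (x ^ 2 - t ^ 2) / (t ^ 2 + x ^ 2) ^ 2 =
      t * x / (π * (t ^ 2 + x ^ 2) ^ 2) * 0 + (x ^ 2 - t ^ 2) / (π * (t ^ 2 + x ^ 2) ^ 2) * π := by
    field_simp; ring
  rw [hlim]
  exact ((tendsto_log_sub_log_sq_add_sq x t).const_mul _).add
    ((tendsto_arctan_sub_arctan ht).const_mul _)

theorem integral_cauchyIntegrand (ht : 0 < t) :
    ∫ y in Set.Ioi 0, cauchyIntegrand x t y = (x ^ 2 - t ^ 2) / (t ^ 2 + x ^ 2) ^ 2 := by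
  rw [integral_Ioi_of_hasDerivAt_of_tendsto
    (hasDerivAt_cauchyIntegrandPrimitive ht.ne' 0).continuousAt.continuousWithinAt
    (fun y hy => cauchyIntegrand_eq_closed ht.ne' (ne_of_gt hy) ▸
      hasDerivAt_cauchyIntegrandPrimitive ht.ne' y)
    (integrableOn_cauchyIntegrand ht) (tendsto_cauchyIntegrandPrimitive_atTop ht),
    cauchyIntegrandPrimitive_zero, sub_zero]

end

/-- The Cauchy density solves the nonlocal Fokker-Planck equation with `d = 0`, `f = 0`,
`ε = 1`, `α = 1`: the symmetrized nonlocal integrand is integrable on `(0,∞)` and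
`∂p/∂t = (1/π) ∫₀^∞ (p(x+y,t) + p(x−y,t) − 2p(x,t))/y² dy`. -/
theorem stmt_13 (t x : ℝ) (ht : 0 < t) :
    IntegrableOn
        (fun y : ℝ => (cauchyP (x + y) t + cauchyP (x - y) t - 2 * cauchyP x t) / y ^ 2)
        (Set.Ioi 0) ∧
    deriv (fun s : ℝ => cauchyP x s) t =
      (1 / Real.pi) *
        ∫ y in Set.Ioi (0 : ℝ),
          (cauchyP (x + y) t + cauchyP (x - y) t - 2 * cauchyP x t) / y ^ 2 := by
  refine ⟨integrableOn_cauchyIntegrand ht, ?_⟩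
  calc deriv (fun s => cauchyP x s) t = (x ^ 2 - t ^ 2) / (π * (t ^ 2 + x ^ 2) ^ 2) :=
        (hasDerivAt_cauchyP ht.ne').deriv
    _ = 1 / π * ∫ y in Set.Ioi 0, cauchyIntegrand x t y := by
        rw [integral_cauchyIntegrand ht]
        field_simp
end

section
/- The function α ↦ 2 C_α (1 + 1/α − ζ(α−1)) tends to 2 as α tends to 2 from the left; equivalently, the maximum-principle threshold 1/(2 C_α (1 + 1/α − ζ(α−1))) tends to 1/2 as α → 2⁻. -/
open scoped BigOperators

/-!
At `α = 2` the factor `Γ(1 - α/2)` in the denominator of `C_α` has a simple pole, so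
`C_α = (2 - α) · D(α)` with `D` continuous and `D(2) = 2 Γ(3/2) / √π = 1`. Meanwhile `ζ(α - 1)`
has a simple pole with residue `1`, so `(2 - α)(1 + 1/α - ζ(α - 1)) → 1`. The product of the two
limits gives `2 C_α (1 + 1/α - ζ(α - 1)) → 2 · 1 · 1`, even as a two-sided limit.
-/

open Filter Real Set Topology

lemma tendsto_sub_one_mul_zetaR_nhdsNE_one :
    Tendsto (fun s : ℝ => (s - 1) * zetaR s) (𝓝[≠] 1) (𝓝 1) := by
  have hofReal : Tendsto (fun s : ℝ => (s : ℂ)) (𝓝[≠] 1) (𝓝[≠] 1) :=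
    Complex.continuous_ofReal.continuousWithinAt.tendsto_nhdsWithin
      fun _ hs => by simpa using hs
  have := (Complex.continuous_re.tendsto 1).comp (riemannZeta_residue_one.comp hofReal)
  refine this.congr fun s => ?_
  simp [zetaR, ← Complex.ofReal_one, ← Complex.ofReal_sub]

lemma tendsto_two_sub_mul_one_add_inv_sub_zetaR :
    Tendsto (fun α : ℝ => (2 - α) * (1 + 1 / α - zetaR (α - 1))) (𝓝[≠] 2) (𝓝 1) := by
  have hshift : Tendsto (fun α : ℝ => α - 1) (𝓝[≠] 2) (𝓝[≠] 1) :=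
    tendsto_nhdsWithin_of_tendsto_nhds_of_eventually_within _
      (((continuous_sub_right (1 : ℝ)).tendsto' 2 1 (by norm_num)).mono_left nhdsWithin_le_nhds)
      (eventually_nhdsWithin_of_forall fun α (hα : α ≠ 2) =>
        show α - 1 ≠ 1 by contrapose! hα; linarith)
  have hzeta := tendsto_sub_one_mul_zetaR_nhdsNE_one.comp hshift
  have hregular : Tendsto (fun α : ℝ => (2 - α) * (1 + 1 / α)) (𝓝[≠] 2) (𝓝 0) := by
    have : ContinuousAt (fun α : ℝ => (2 - α) * (1 + 1 / α)) 2 := by fun_prop (disch := norm_num)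
    simpa using this.tendsto.mono_left nhdsWithin_le_nhds
  refine (zero_add (1 : ℝ) ▸ hregular.add hzeta).congr fun α => ?_
  simp only [Function.comp_apply]
  ring

noncomputable def CconstReg (α : ℝ) : ℝ :=
  α * Gamma ((1 + α) / 2) / ((2 : ℝ) ^ (2 - α) * √π * Gamma (2 - α / 2))

lemma Cconst_eq_two_sub_mul_CconstReg {α : ℝ} (hα : α ≠ 2) :
    Cconst α = (2 - α) * CconstReg α := by
  have hhalf : 1 - α / 2 ≠ 0 := fun h => hα (by linarith)
  rw [Cconst, CconstReg, show 2 - α / 2 = 1 - α / 2 + 1 by ring, Gamma_add_one hhalf,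
    show 2 - α = 1 + (1 - α) by ring, rpow_add two_pos, rpow_one]
  field_simp
  ring

lemma CconstReg_two : CconstReg 2 = 1 := by
  have hGamma : Gamma ((1 + 2) / 2) = √π / 2 := by
    rw [show ((1 + 2) / 2 : ℝ) = 1 / 2 + 1 by norm_num, Gamma_add_one (by norm_num),
      Gamma_one_half_eq]
    ring
  have hπ : √π ≠ 0 := (sqrt_pos.mpr pi_pos).ne'
  simp only [CconstReg, hGamma, show (2 : ℝ) - 2 / 2 = 1 by norm_num, Gamma_one, sub_self,
    rpow_zero]
  field_simp

lemma continuousAt_CconstReg_two : ContinuousAt CconstReg 2 := by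
  have hGamma : ∀ s : ℝ, 0 < s → ContinuousAt Gamma s := fun s hs =>
    (differentiableAt_Gamma fun m => by
      have : (0 : ℝ) ≤ m := m.cast_nonneg; intro h; linarith).continuousAt
  have hnum : ContinuousAt (fun α : ℝ => Gamma ((1 + α) / 2)) 2 :=
    (hGamma _ (by norm_num)).comp (by fun_prop)
  have hden : ContinuousAt (fun α : ℝ => Gamma (2 - α / 2)) 2 :=
    (hGamma _ (by norm_num)).comp (by fun_prop)
  have hden_ne : (2 : ℝ) ^ (2 - 2 : ℝ) * √π * Gamma (2 - 2 / 2) ≠ 0 := by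
    have := Gamma_pos_of_pos (show (0 : ℝ) < 2 - 2 / 2 by norm_num)
    have := sqrt_pos.mpr pi_pos
    positivity
  exact (continuousAt_id.mul hnum).div
    (((continuousAt_const_rpow two_ne_zero).comp (by fun_prop)).mul continuousAt_const |>.mul hden)
    hden_ne

lemma tendsto_Cconst_div_two_sub :
    Tendsto (fun α : ℝ => Cconst α / (2 - α)) (𝓝[≠] 2) (𝓝 1) := by
  refine (CconstReg_two ▸ continuousAt_CconstReg_two.tendsto.mono_left nhdsWithin_le_nhds).congr' ?_
  filter_upwards [self_mem_nhdsWithin] with α (hα : α ≠ 2)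
  rw [Cconst_eq_two_sub_mul_CconstReg hα, mul_div_cancel_left₀ _ (sub_ne_zero.mpr hα.symm)]

/-- As `α → 2⁻`, the quantity `2 C_α (1 + 1/α − ζ(α−1))` tends to `2`; equivalently
the maximum-principle threshold `1/(2 C_α (1 + 1/α − ζ(α−1)))` tends to `1/2`. -/
theorem stmt_15 :
    Filter.Tendsto (fun α : ℝ => 2 * Cconst α * (1 + 1 / α - zetaR (α - 1)))
        (nhdsWithin 2 (Set.Iio 2)) (nhds 2) ∧
    Filter.Tendsto (fun α : ℝ => 1 / (2 * Cconst α * (1 + 1 / α - zetaR (α - 1))))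
        (nhdsWithin 2 (Set.Iio 2)) (nhds (1 / 2)) := by
  have hlim : Tendsto (fun α : ℝ => 2 * Cconst α * (1 + 1 / α - zetaR (α - 1)))
      (𝓝[≠] 2) (𝓝 2) := by
    have := (tendsto_Cconst_div_two_sub.const_mul 2).mul tendsto_two_sub_mul_one_add_inv_sub_zetaR
    rw [mul_one, mul_one] at this
    refine this.congr' ?_
    filter_upwards [self_mem_nhdsWithin] with α (hα : α ≠ 2)
    field_simp [sub_ne_zero.mpr hα.symm]
  have hleft := hlim.mono_left (nhdsWithin_mono 2 fun α (hα : α < 2) => hα.ne)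
  exact ⟨hleft, tendsto_const_nhds.div hleft two_ne_zero⟩
end

section
/- The function α ↦ 2 C_α (1 + 1/α − ζ(α−1)) tends to 1 as α tends to 0 from the right; equivalently, the maximum-principle threshold 1/(2 C_α (1 + 1/α − ζ(α−1))) tends to 1 as α → 0⁺. -/
open scoped BigOperators

/-!
`C_α` vanishes linearly at `α = 0` while `1 + 1/α − ζ(α−1)` blows up like `1/α`. Factoring
`C_α = α · Cratio α`, the product becomes `2 Cratio α · (1 + α (1 − ζ(α−1)))`, which is
continuous at `0` because `ζ` is regular at `−1` and `Γ` at `1/2` and `1`; its value there is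
`2 · Γ(1/2) / (2 √π Γ(1)) = 1`.
-/

open Filter Topology

lemma Real.continuousAt_Gamma_of_pos {s : ℝ} (hs : 0 < s) : ContinuousAt Real.Gamma s :=
  (Real.differentiableAt_Gamma fun m h => by linarith [m.cast_nonneg (α := ℝ)]).continuousAt

lemma continuousAt_zetaR {s : ℝ} (hs : s ≠ 1) : ContinuousAt zetaR s :=
  Complex.continuous_re.continuousAt.comp <|
    (differentiableAt_riemannZeta (by exact_mod_cast hs)).continuousAt.comp
      Complex.continuous_ofReal.continuousAt

noncomputable def Cratio (α : ℝ) : ℝ :=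
  Real.Gamma ((1 + α) / 2) /
    ((2 : ℝ) ^ (1 - α) * Real.sqrt Real.pi * Real.Gamma (1 - α / 2))

lemma Cconst_eq_mul_Cratio (α : ℝ) : Cconst α = α * Cratio α :=
  mul_div_assoc _ _ _

lemma Cratio_zero : Cratio 0 = 1 / 2 := by
  have hπ : Real.sqrt Real.pi ≠ 0 := by positivity
  norm_num [Cratio, Real.Gamma_one_half_eq]
  field_simp

lemma continuousAt_Cratio {α : ℝ} (h₁ : -1 < α) (h₂ : α < 2) : ContinuousAt Cratio α := by
  have hΓ₁ : ContinuousAt (fun α : ℝ => Real.Gamma ((1 + α) / 2)) α :=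
    (Real.continuousAt_Gamma_of_pos (by linarith)).comp (by fun_prop)
  have hΓ₂ : ContinuousAt (fun α : ℝ => Real.Gamma (1 - α / 2)) α :=
    (Real.continuousAt_Gamma_of_pos (by linarith)).comp (by fun_prop)
  have hpow : ContinuousAt (fun α : ℝ => (2 : ℝ) ^ (1 - α)) α :=
    continuousAt_const.rpow (by fun_prop) (Or.inl two_ne_zero)
  have hΓ₂_pos : 0 < Real.Gamma (1 - α / 2) := Real.Gamma_pos_of_pos (by linarith)
  exact hΓ₁.div ((hpow.mul continuousAt_const).mul hΓ₂) (by positivity)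

lemma two_mul_Cconst_mul_eq {α : ℝ} (hα : α ≠ 0) :
    2 * Cconst α * (1 + 1 / α - zetaR (α - 1)) =
      2 * Cratio α * (1 + α * (1 - zetaR (α - 1))) := by
  rw [Cconst_eq_mul_Cratio]
  field_simp
  ring

theorem tendsto_two_mul_Cconst_mul :
    Tendsto (fun α : ℝ => 2 * Cconst α * (1 + 1 / α - zetaR (α - 1))) (𝓝[>] 0) (𝓝 1) := by
  have hcont : ContinuousAt (fun α : ℝ => 2 * Cratio α * (1 + α * (1 - zetaR (α - 1)))) 0 :=
    (continuousAt_const.mul (continuousAt_Cratio (by norm_num) (by norm_num))).mul <|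
      continuousAt_const.add <| continuousAt_id.mul <| continuousAt_const.sub <|
        (continuousAt_zetaR (by norm_num)).comp (by fun_prop)
  have hval : 2 * Cratio 0 * (1 + 0 * (1 - zetaR (0 - 1))) = 1 := by
    rw [Cratio_zero]
    ring
  refine ((hval ▸ hcont.tendsto).mono_left nhdsWithin_le_nhds).congr' ?_
  filter_upwards [self_mem_nhdsWithin] with α hα
  exact (two_mul_Cconst_mul_eq (ne_of_gt hα)).symm

/-- As `α → 0⁺`, the quantity `2 C_α (1 + 1/α − ζ(α−1))` tends to `1`; equivalently
the maximum-principle threshold `1/(2 C_α (1 + 1/α − ζ(α−1)))` tends to `1`. -/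
theorem stmt_16 :
    Filter.Tendsto (fun α : ℝ => 2 * Cconst α * (1 + 1 / α - zetaR (α - 1)))
        (nhdsWithin 0 (Set.Ioi 0)) (nhds 1) ∧
    Filter.Tendsto (fun α : ℝ => 1 / (2 * Cconst α * (1 + 1 / α - zetaR (α - 1))))
        (nhdsWithin 0 (Set.Ioi 0)) (nhds 1) := by
  refine ⟨tendsto_two_mul_Cconst_mul, ?_⟩
  simpa only [one_div, inv_one] using tendsto_two_mul_Cconst_mul.inv₀ one_ne_zero
end
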